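/- arXiv:1907.02648 — 2 statements merged into one kernel-verified Lean document; each statement's English description precedes it below -/
import Mathlib

section
/- Let (Ω, μ) be a probability space and X, Y : Ω → ℂᴹ be independent random vectors with E{X_m} = 0 for all m, such that all entries and all entrywise second-moment products are integrable and |XᴴY|² is integrable. Let R_X and R_Y be their correlation matrices, (R_X)_{m,m'} = E{X_m·conj(X_{m'})}, (R_Y)_{m,m'} = E{Y_m·conj(Y_{m'})}, and assume Re(tr R_X) > 0 and Re(tr R_Y) > 0. Then the variance of the normalized inner product satisfies: E{|XᴴY|²/(Re(tr R_X)·Re(tr R_Y))} − |E{XᴴY}|²/(Re(tr R_X)·Re(tr R_Y)) = Re(tr(R_X·R_Y))/(Re(tr R_X)·Re(tr R_Y)); in particular E{XᴴY} = 0, E{‖X‖²} = Re(tr R_X), E{‖Y‖²} = Re(tr R_Y), and the variance of XᴴY/√(E{‖X‖²}·E{‖Y‖²}) equals tr(R_X·R_Y)/(tr(R_X)·tr(R_Y)). -/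
/-!
Write `Z = Xᴴ Y = ∑ₘ conj (Xₘ) Yₘ`. Independence factors every expectation of a product of a
function of `X` and a function of `Y`. Hence `E Z = ∑ₘ conj (E Xₘ) E Yₘ = 0`, and expanding
`|Z|² = ∑ₘ ∑ₘ' (Xₘ' conj Xₘ) (Yₘ conj Yₘ')` gives `E |Z|² = ∑ₘ ∑ₘ' (R_X)ₘ'ₘ (R_Y)ₘₘ' = tr (R_Y R_X)`.
-/

open Matrix MeasureTheory ProbabilityTheory

section Correlation

variable {ι Ω : Type*} [Fintype ι] [MeasurableSpace Ω] {μ : Measure Ω}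

lemma integral_sum_norm_sq_eq_re_trace {W : Ω → ι → ℂ} {R : Matrix ι ι ℂ}
    (hW : ∀ m, Integrable (fun ω => W ω m * star (W ω m)) μ)
    (hR : ∀ m, R m m = ∫ ω, W ω m * star (W ω m) ∂μ) :
    ∫ ω, ∑ m, ‖W ω m‖ ^ 2 ∂μ = R.trace.re := by
  have hpt : ∀ ω, ∑ m, W ω m * star (W ω m) = ((∑ m, ‖W ω m‖ ^ 2 : ℝ) : ℂ) := fun ω => by
    push_cast
    exact Finset.sum_congr rfl fun m _ => Complex.mul_conj' _
  calc ∫ ω, ∑ m, ‖W ω m‖ ^ 2 ∂μ = (∫ ω, ((∑ m, ‖W ω m‖ ^ 2 : ℝ) : ℂ) ∂μ).re := by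
        rw [integral_complex_ofReal, Complex.ofReal_re]
    _ = (∫ ω, ∑ m, W ω m * star (W ω m) ∂μ).re := by simp_rw [hpt]
    _ = R.trace.re := by
        rw [integral_finsetSum _ fun m _ => hW m]
        simp only [trace, diag, hR]

variable {X Y : Ω → ι → ℂ}

lemma integral_star_dotProduct_eq_zero (hXY : IndepFun X Y μ) (hXmean : ∀ m, ∫ ω, X ω m ∂μ = 0)
    (hX : ∀ m, Integrable (fun ω => X ω m) μ) (hY : ∀ m, Integrable (fun ω => Y ω m) μ) :
    ∫ ω, star (X ω) ⬝ᵥ Y ω ∂μ = 0 := by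
  have hind : ∀ m, IndepFun (fun ω => star (X ω m)) (fun ω => Y ω m) μ := fun m =>
    hXY.comp (φ := fun v : ι → ℂ => star (v m)) (ψ := fun v : ι → ℂ => v m) (by fun_prop)
      (by fun_prop)
  have hXstar : ∀ m, Integrable (fun ω => star (X ω m)) μ := fun m =>
    (LinearIsometryEquiv.integrable_comp_iff Complex.conjLIE).2 (hX m)
  simp only [dotProduct, Pi.star_apply]
  rw [integral_finsetSum (f := fun m ω => star (X ω m) * Y ω m) _
    fun m _ => (hind m).integrable_mul (hXstar m) (hY m)]
  refine Finset.sum_eq_zero fun m _ => ?_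
  rw [(hind m).integral_fun_mul_eq_mul_integral (hXstar m).1 (hY m).1]
  change (∫ ω, (starRingEnd ℂ) (X ω m) ∂μ) * _ = 0
  rw [integral_conj, hXmean m, map_zero, zero_mul]

lemma integral_norm_star_dotProduct_sq_eq_re_trace_mul {RX RY : Matrix ι ι ℂ}
    (hXY : IndepFun X Y μ)
    (hXX : ∀ m m', Integrable (fun ω => X ω m * star (X ω m')) μ)
    (hYY : ∀ m m', Integrable (fun ω => Y ω m * star (Y ω m')) μ)
    (hRX : ∀ m m', RX m m' = ∫ ω, X ω m * star (X ω m') ∂μ)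
    (hRY : ∀ m m', RY m m' = ∫ ω, Y ω m * star (Y ω m') ∂μ) :
    ∫ ω, ‖star (X ω) ⬝ᵥ Y ω‖ ^ 2 ∂μ = (RX * RY).trace.re := by
  have hind : ∀ m m', IndepFun (fun ω => X ω m' * star (X ω m))
      (fun ω => Y ω m * star (Y ω m')) μ := fun m m' =>
    hXY.comp (φ := fun v : ι → ℂ => v m' * star (v m)) (ψ := fun v : ι → ℂ => v m * star (v m'))
      (by fun_prop) (by fun_prop)
  have hterm : ∀ m m', Integrable
      (fun ω => X ω m' * star (X ω m) * (Y ω m * star (Y ω m'))) μ := fun m m' =>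
    (hind m m').integrable_mul (hXX m' m) (hYY m m')
  have hexpand : ∀ ω, ((‖star (X ω) ⬝ᵥ Y ω‖ ^ 2 : ℝ) : ℂ)
      = ∑ m, ∑ m', X ω m' * star (X ω m) * (Y ω m * star (Y ω m')) := fun ω => by
    rw [Complex.ofReal_pow, ← Complex.mul_conj']
    change _ * star _ = _
    simp only [dotProduct, Pi.star_apply, star_sum, star_mul', star_star, Finset.sum_mul_sum]
    exact Finset.sum_congr rfl fun m _ => Finset.sum_congr rfl fun m' _ => by ring
  have hcomplex : ∫ ω, ((‖star (X ω) ⬝ᵥ Y ω‖ ^ 2 : ℝ) : ℂ) ∂μ = (RY * RX).trace := by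
    simp_rw [hexpand]
    rw [integral_finsetSum _ fun m _ => integrable_finsetSum _ fun m' _ => hterm m m']
    refine Finset.sum_congr rfl fun m _ => ?_
    rw [integral_finsetSum _ fun m' _ => hterm m m', diag, mul_apply]
    refine Finset.sum_congr rfl fun m' _ => ?_
    rw [(hind m m').integral_fun_mul_eq_mul_integral (hXX m' m).1 (hYY m m').1, ← hRX, ← hRY,
      mul_comm]
  rw [trace_mul_comm, ← hcomplex, integral_complex_ofReal, Complex.ofReal_re]

end Correlation

lemma Complex.norm_div_ofReal_sqrt_sq (z : ℂ) {c : ℝ} (hc : 0 ≤ c) :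
    ‖z / (Real.sqrt c : ℂ)‖ ^ 2 = ‖z‖ ^ 2 / c := by
  rw [norm_div, div_pow, Complex.norm_real, Real.norm_of_nonneg (Real.sqrt_nonneg c),
    Real.sq_sqrt hc]

theorem favorable_propagation_variance_general {M : ℕ} {Ω : Type*} [MeasurableSpace Ω]
    (μ : Measure Ω)
    (X Y : Ω → Fin M → ℂ)
    (hindep : ProbabilityTheory.IndepFun X Y μ)
    (hXmean : ∀ m, (∫ ω, X ω m ∂μ) = 0)
    (hXint : ∀ m, Integrable (fun ω => X ω m) μ)
    (hYint : ∀ m, Integrable (fun ω => Y ω m) μ)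
    (hXX : ∀ m m', Integrable (fun ω => X ω m * star (X ω m')) μ)
    (hYY : ∀ m m', Integrable (fun ω => Y ω m * star (Y ω m')) μ)
    (RX RY : Matrix (Fin M) (Fin M) ℂ)
    (hRX : ∀ m m', RX m m' = ∫ ω, X ω m * star (X ω m') ∂μ)
    (hRY : ∀ m m', RY m m' = ∫ ω, Y ω m * star (Y ω m') ∂μ) :
    (∫ ω, star (X ω) ⬝ᵥ Y ω ∂μ) = 0 ∧
    (∫ ω, ∑ m, ‖X ω m‖ ^ 2 ∂μ) = (RX.trace).re ∧
    (∫ ω, ∑ m, ‖Y ω m‖ ^ 2 ∂μ) = (RY.trace).re ∧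
    (∫ ω, ‖star (X ω) ⬝ᵥ Y ω‖ ^ 2 / ((RX.trace).re * (RY.trace).re) ∂μ)
        - ‖∫ ω, star (X ω) ⬝ᵥ Y ω ∂μ‖ ^ 2 / ((RX.trace).re * (RY.trace).re)
      = ((RX * RY).trace).re / ((RX.trace).re * (RY.trace).re) ∧
    (∫ ω, ‖(star (X ω) ⬝ᵥ Y ω) /
          (Real.sqrt ((RX.trace).re * (RY.trace).re) : ℂ)‖ ^ 2 ∂μ)
        - ‖∫ ω, (star (X ω) ⬝ᵥ Y ω) /
              (Real.sqrt ((RX.trace).re * (RY.trace).re) : ℂ) ∂μ‖ ^ 2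
      = ((RX * RY).trace).re / ((RX.trace).re * (RY.trace).re) := by
  have hmean := integral_star_dotProduct_eq_zero hindep hXmean hXint hYint
  have hEX := integral_sum_norm_sq_eq_re_trace (fun m => hXX m m) (fun m => hRX m m)
  have hEY := integral_sum_norm_sq_eq_re_trace (fun m => hYY m m) (fun m => hRY m m)
  have hsecond := integral_norm_star_dotProduct_sq_eq_re_trace_mul hindep hXX hYY hRX hRY
  have hc : 0 ≤ (RX.trace).re * (RY.trace).re := by
    rw [← hEX, ← hEY]
    exact mul_nonneg (integral_nonneg fun _ => by positivity)
      (integral_nonneg fun _ => by positivity)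
  refine ⟨hmean, hEX, hEY, ?_, ?_⟩
  · rw [integral_div, hsecond, hmean, norm_zero]
    ring
  · simp_rw [Complex.norm_div_ofReal_sqrt_sq _ hc]
    rw [integral_div, integral_div, hsecond, hmean, zero_div, norm_zero]
    ring

/-- Equation (16) of the paper (favorable propagation): for independent random
vectors `X, Y : Ω → ℂᴹ` with `X` zero-mean and correlation matrices `R_X, R_Y`
having positive traces, one has `E{XᴴY} = 0`, `E{‖X‖²} = Re tr R_X`,
`E{‖Y‖²} = Re tr R_Y`, and the variance of the normalized inner product
`XᴴY/√(E{‖X‖²}·E{‖Y‖²})` equals `tr(R_X R_Y)/(tr R_X · tr R_Y)`. -/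
theorem favorable_propagation_variance {M : ℕ} {Ω : Type*} [MeasurableSpace Ω]
    (μ : Measure Ω) [IsProbabilityMeasure μ]
    (X Y : Ω → Fin M → ℂ) (hX : Measurable X) (hY : Measurable Y)
    (hindep : ProbabilityTheory.IndepFun X Y μ)
    (hXmean : ∀ m, (∫ ω, X ω m ∂μ) = 0)
    (hXint : ∀ m, Integrable (fun ω => X ω m) μ)
    (hYint : ∀ m, Integrable (fun ω => Y ω m) μ)
    (hXX : ∀ m m', Integrable (fun ω => X ω m * star (X ω m')) μ)
    (hYY : ∀ m m', Integrable (fun ω => Y ω m * star (Y ω m')) μ)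
    (hZ2 : Integrable (fun ω => ‖star (X ω) ⬝ᵥ Y ω‖ ^ 2) μ)
    (RX RY : Matrix (Fin M) (Fin M) ℂ)
    (hRX : ∀ m m', RX m m' = ∫ ω, X ω m * star (X ω m') ∂μ)
    (hRY : ∀ m m', RY m m' = ∫ ω, Y ω m * star (Y ω m') ∂μ)
    (htrX : 0 < (RX.trace).re) (htrY : 0 < (RY.trace).re) :
    (∫ ω, star (X ω) ⬝ᵥ Y ω ∂μ) = 0 ∧
    (∫ ω, ∑ m, ‖X ω m‖ ^ 2 ∂μ) = (RX.trace).re ∧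
    (∫ ω, ∑ m, ‖Y ω m‖ ^ 2 ∂μ) = (RY.trace).re ∧
    (∫ ω, ‖star (X ω) ⬝ᵥ Y ω‖ ^ 2 / ((RX.trace).re * (RY.trace).re) ∂μ)
        - ‖∫ ω, star (X ω) ⬝ᵥ Y ω ∂μ‖ ^ 2 / ((RX.trace).re * (RY.trace).re)
      = ((RX * RY).trace).re / ((RX.trace).re * (RY.trace).re) ∧
    (∫ ω, ‖(star (X ω) ⬝ᵥ Y ω) /
          (Real.sqrt ((RX.trace).re * (RY.trace).re) : ℂ)‖ ^ 2 ∂μ)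
        - ‖∫ ω, (star (X ω) ⬝ᵥ Y ω) /
              (Real.sqrt ((RX.trace).re * (RY.trace).re) : ℂ) ∂μ‖ ^ 2
      = ((RX * RY).trace).re / ((RX.trace).re * (RY.trace).re) :=
  favorable_propagation_variance_general μ X Y hindep hXmean hXint hYint hXX hYY RX RY hRX hRY
end

section
/- Let Q be a (τM)×(τM) Hermitian positive definite complex matrix indexed by pairs (i,m) with i ∈ {1,…,τ}, m ∈ {1,…,M}, let R be an M×M Hermitian positive semidefinite complex matrix, let φ ∈ ℂ^τ, and let p ≥ 0. Let A be the (τM)×M matrix with entries A_{(i,m),m'} = φᵢ·R_{m,m'} (i.e., A = φ ⊗ R, the Kronecker product of the column vector φ with R). If Q − p·(φφᴴ) ⊗ R is positive semidefinite, then the matrix C = R − p·AᴴQ⁻¹A is Hermitian positive semidefinite. -/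
/-!
Write `B = √p • (φ ⊗ 1)`, so that `B R = √p • A` and `B R Bᴴ = p • (φφᴴ) ⊗ R`. The block matrix
`[[R, (BR)ᴴ], [BR, Q]]` is positive semidefinite, being the sum of `[1, Bᴴ]ᴴ R [1, Bᴴ]` and
`diag(0, Q - B R Bᴴ)`. Since `Q` is positive definite, its Schur complement
`R - (BR)ᴴ Q⁻¹ (BR) = R - p • Aᴴ Q⁻¹ A` is then positive semidefinite as well.
-/

open Matrix
open scoped Kronecker ComplexOrder

namespace Matrix

section
variable {m n R : Type*} [Fintype m] [Fintype n] [DecidableEq m] [DecidableEq n]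
  [CommRing R] [PartialOrder R] [StarRing R] [StarOrderedRing R]

theorem PosSemidef.fromBlocks_mul_conjTranspose {P : Matrix m m R} {Q : Matrix n n R}
    (B : Matrix n m R) (hP : P.PosSemidef) (hQ : (Q - B * P * Bᴴ).PosSemidef) :
    (fromBlocks P (B * P)ᴴ (B * P) Q).PosSemidef := by
  have hcols : (fromCols 1 Bᴴ)ᴴ * P * fromCols 1 Bᴴ
      = fromBlocks P (B * P)ᴴ (B * P) (B * P * Bᴴ) := by
    simp only [conjTranspose_fromCols_eq_fromRows_conjTranspose, conjTranspose_one,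
      conjTranspose_conjTranspose, fromRows_mul, one_mul, mul_fromCols, Matrix.mul_one,
      fromCols_fromRows_eq_fromBlocks, conjTranspose_mul, hP.1.eq]
  have hcorner : (fromCols (0 : Matrix n m R) 1)ᴴ * (Q - B * P * Bᴴ) *
      fromCols (0 : Matrix n m R) 1 = fromBlocks 0 0 0 (Q - B * P * Bᴴ) := by
    ext (i | i) (j | j) <;>
      simp [conjTranspose_fromCols_eq_fromRows_conjTranspose, fromRows_mul, mul_fromCols]
  have hsum : fromBlocks P (B * P)ᴴ (B * P) Q
      = fromBlocks P (B * P)ᴴ (B * P) (B * P * Bᴴ) + fromBlocks 0 0 0 (Q - B * P * Bᴴ) := by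
    simp only [fromBlocks_add, add_zero, add_sub_cancel]
  rw [hsum, ← hcols, ← hcorner]
  exact (hP.conjTranspose_mul_mul_same _).add (hQ.conjTranspose_mul_mul_same _)

end

section
variable {m n K : Type*} [Fintype m] [Fintype n] [DecidableEq m] [DecidableEq n]
  [Field K] [PartialOrder K] [StarRing K] [StarOrderedRing K]

theorem PosSemidef.sub_conjTranspose_mul_inv_mul {P : Matrix m m K} {Q : Matrix n n K}
    (B : Matrix n m K) (hQ : Q.PosDef) (hP : P.PosSemidef) (hQP : (Q - B * P * Bᴴ).PosSemidef) :
    (P - (B * P)ᴴ * Q⁻¹ * (B * P)).PosSemidef := by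
  have := hQ.isUnit.invertible
  have hschur := (PosDef.fromBlocks₂₂ P (B * P)ᴴ hQ).mp <| by
    simpa only [conjTranspose_conjTranspose] using hP.fromBlocks_mul_conjTranspose B hQP
  rwa [conjTranspose_conjTranspose] at hschur

end

def vecKronecker {ι m n α : Type*} [Mul α] (φ : ι → α) (X : Matrix m n α) : Matrix (ι × m) n α :=
  of fun q j => φ q.1 * X q.2 j

section
variable {ι κ m n o α : Type*} [Fintype n] [CommSemiring α]

theorem vecKronecker_mul (φ : ι → α) (X : Matrix m n α) (Y : Matrix n o α) :
    vecKronecker φ X * Y = vecKronecker φ (X * Y) := by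
  ext q j
  simp [vecKronecker, mul_apply, Finset.mul_sum, mul_assoc]

theorem vecKronecker_mul_conjTranspose [StarRing α] (φ : ι → α) (ψ : κ → α) (X : Matrix m n α)
    (Y : Matrix o n α) :
    vecKronecker φ X * (vecKronecker ψ Y)ᴴ = vecMulVec φ (star ψ) ⊗ₖ (X * Yᴴ) := by
  ext q q'
  simp only [vecKronecker, mul_apply, conjTranspose_apply, kroneckerMap_apply, vecMulVec_apply,
    of_apply, star_mul', Pi.star_apply, Finset.mul_sum]
  exact Finset.sum_congr rfl fun _ _ => by ring

end

end Matrix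

/-- Deterministic content of Lemma 1 of the paper: the MMSE estimation error
correlation matrix `C = R − p·AᴴQ⁻¹A`, with `A = φ ⊗ R`, is Hermitian positive
semidefinite, provided `Q` is Hermitian positive definite, `R` is Hermitian
positive semidefinite, `p ≥ 0`, and `Q − p·(φφᴴ) ⊗ R` is positive
semidefinite. -/
theorem mmse_error_correlation_posSemidef {τ M : ℕ}
    (Q : Matrix (Fin τ × Fin M) (Fin τ × Fin M) ℂ) (hQ : Q.PosDef)
    (R : Matrix (Fin M) (Fin M) ℂ) (hR : R.PosSemidef)
    (φ : Fin τ → ℂ) (p : ℝ) (hp : 0 ≤ p)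
    (A : Matrix (Fin τ × Fin M) (Fin M) ℂ)
    (hA : A = Matrix.of fun (q : Fin τ × Fin M) (m' : Fin M) => φ q.1 * R q.2 m')
    (hQR : (Q - (p : ℂ) • (vecMulVec φ (star φ) ⊗ₖ R)).PosSemidef) :
    (R - (p : ℂ) • (Aᴴ * Q⁻¹ * A)).PosSemidef := by
  set c : ℂ := (Real.sqrt p : ℂ)
  have hc_star : star c = c := Complex.conj_ofReal _
  have hcc : c * c = p := by rw [← Complex.ofReal_mul, Real.mul_self_sqrt hp]
  have hA' : A = vecKronecker φ R := hA
  set B := c • vecKronecker φ (1 : Matrix (Fin M) (Fin M) ℂ)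
  have hBR : B * R = c • A := by rw [Matrix.smul_mul, vecKronecker_mul, Matrix.one_mul, hA']
  have hBRB : B * R * Bᴴ = (p : ℂ) • (vecMulVec φ (star φ) ⊗ₖ R) := by
    rw [hBR, hA', conjTranspose_smul, Matrix.smul_mul, Matrix.mul_smul, smul_smul, hc_star, hcc,
      vecKronecker_mul_conjTranspose, conjTranspose_one, Matrix.mul_one]
  have hT : (B * R)ᴴ * Q⁻¹ * (B * R) = (p : ℂ) • (Aᴴ * Q⁻¹ * A) := by
    rw [hBR, conjTranspose_smul, Matrix.smul_mul, Matrix.smul_mul, Matrix.mul_smul, smul_smul,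
      hc_star, hcc]
  simpa only [hT] using hR.sub_conjTranspose_mul_inv_mul B hQ (hBRB ▸ hQR)
end
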